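/- arXiv:2105.03393 — 4 statements merged into one kernel-verified Lean document; each statement's English description precedes it below -/
import Mathlib

section
/- Let H be a real separable Hilbert space with Hilbert basis (φ_j)_{j∈ℕ}, let λ : ℕ → ℝ satisfy λ_j > 0 for all j, let ω > 0, and let δ > 0 satisfy δ ≤ |√(λ_j) − ω| for all j. If g ∈ H and e ∈ H satisfy (λ_j − ω²)⟨e, φ_j⟩ = ω⟨g, φ_j⟩ for all j ∈ ℕ, then ‖e‖ ≤ (1/δ)‖g‖, i.e. ω‖e‖ ≤ (ω/δ)‖g‖. -/
open scoped RealInnerProductSpace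

/-- first estimate of the Stability Theorem:
`ω‖e‖ ≤ (ω/δ)‖g‖`, i.e. `‖e‖ ≤ (1/δ)‖g‖`. -/
theorem maxwell_stability_L2
    {H : Type*} [NormedAddCommGroup H] [InnerProductSpace ℝ H] [CompleteSpace H]
    (φ : HilbertBasis ℕ ℝ H) (lam : ℕ → ℝ) (hlam : ∀ j, 0 < lam j)
    (ω : ℝ) (hω : 0 < ω) (δ : ℝ) (hδ : 0 < δ)
    (hres : ∀ j, δ ≤ |Real.sqrt (lam j) - ω|)
    (g e : H) (he : ∀ j, (lam j - ω ^ 2) * ⟪e, φ j⟫ = ω * ⟪g, φ j⟫) :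
    ‖e‖ ≤ (1 / δ) * ‖g‖ ∧ ω * ‖e‖ ≤ (ω / δ) * ‖g‖ := by
  -- pointwise coefficient bound
  have key : ∀ j, ‖φ.repr e j‖ ≤ δ⁻¹ * ‖φ.repr g j‖ := by
    intro j
    have hs : Real.sqrt (lam j) ^ 2 = lam j := Real.sq_sqrt (hlam j).le
    have hsp : (0:ℝ) < Real.sqrt (lam j) + ω := by
      have := Real.sqrt_nonneg (lam j); linarith
    have hfac : δ * ω ≤ |lam j - ω ^ 2| := by
      have h1 : |lam j - ω ^ 2| = |Real.sqrt (lam j) - ω| * (Real.sqrt (lam j) + ω) := by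
        rw [show lam j - ω ^ 2 = (Real.sqrt (lam j) - ω) * (Real.sqrt (lam j) + ω) by nlinarith,
          abs_mul, abs_of_pos hsp]
      rw [h1]
      have : ω ≤ Real.sqrt (lam j) + ω := by
        have := Real.sqrt_nonneg (lam j); linarith
      exact mul_le_mul (hres j) this hω.le (abs_nonneg _)
    have h2 : |lam j - ω ^ 2| * |⟪e, φ j⟫| = ω * |⟪g, φ j⟫| := by
      rw [← abs_mul, he j, abs_mul, abs_of_pos hω]
    have h3 : |⟪e, φ j⟫| ≤ δ⁻¹ * |⟪g, φ j⟫| := by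
      have h4 : δ * ω * |⟪e, φ j⟫| ≤ |lam j - ω ^ 2| * |⟪e, φ j⟫| :=
        mul_le_mul_of_nonneg_right hfac (abs_nonneg _)
      rw [h2] at h4
      rw [inv_mul_eq_div, le_div_iff₀ hδ]
      nlinarith
    have hre : ∀ x : H, φ.repr x j = ⟪x, φ j⟫ := fun x => by
      rw [φ.repr_apply_apply, real_inner_comm]
    simpa [hre, Real.norm_eq_abs] using h3
  have h1 : ‖e‖ ≤ (1 / δ) * ‖g‖ := by
    rw [← φ.repr.norm_map e, ← φ.repr.norm_map g]
    refine lp.norm_le_of_forall_sum_le (by norm_num) (by positivity) fun s => ?_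
    have ht : ((2 : ENNReal)).toReal = (2:ℝ) := by norm_num
    rw [ht]
    have hrp : ∀ x : ℝ, 0 ≤ x → x ^ (2:ℝ) = x ^ (2:ℕ) := fun x hx => by
      rw [← Real.rpow_natCast x 2]; norm_num
    calc ∑ i ∈ s, ‖(φ.repr e) i‖ ^ (2:ℝ)
        ≤ ∑ i ∈ s, (δ⁻¹ * ‖(φ.repr g) i‖) ^ (2:ℝ) := by
          refine Finset.sum_le_sum fun i _ => ?_
          rw [hrp _ (norm_nonneg _), hrp _ (by positivity)]
          exact pow_le_pow_left₀ (norm_nonneg _) (key i) 2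
      _ = (δ⁻¹) ^ (2:ℕ) * ∑ i ∈ s, ‖(φ.repr g) i‖ ^ (2:ℝ) := by
          rw [Finset.mul_sum]
          refine Finset.sum_congr rfl fun i _ => ?_
          rw [hrp _ (by positivity), hrp _ (norm_nonneg _)]
          ring
      _ ≤ (δ⁻¹) ^ (2:ℕ) * ‖φ.repr g‖ ^ (2:ℝ) := by
          have := lp.sum_rpow_le_norm_rpow (p := 2) (by norm_num) (φ.repr g) s
          rw [ht] at this
          exact mul_le_mul_of_nonneg_left this (by positivity)
      _ = (1 / δ * ‖φ.repr g‖) ^ (2:ℝ) := by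
          rw [hrp ‖φ.repr g‖ (norm_nonneg _),
            hrp (1 / δ * ‖φ.repr g‖) (by positivity)]
          ring
  exact ⟨h1, by
    have := mul_le_mul_of_nonneg_left h1 hω.le
    calc ω * ‖e‖ ≤ ω * ((1/δ) * ‖g‖) := this
      _ = (ω / δ) * ‖g‖ := by ring⟩
end

section
/- Let H be a real separable Hilbert space with Hilbert basis (φ_j)_{j∈ℕ}, let λ : ℕ → ℝ satisfy λ_j > 0 for all j, let ω > 0, and let δ > 0 satisfy δ ≤ |√(λ_j) − ω| for all j. If g ∈ H and e ∈ H satisfy (λ_j − ω²)⟨e, φ_j⟩ = ω⟨g, φ_j⟩ for all j ∈ ℕ, then the family (λ_j·⟨e, φ_j⟩²)_{j∈ℕ} is summable and Σ_{j∈ℕ} λ_j·⟨e, φ_j⟩² ≤ (ω/δ)²·‖g‖². -/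
open scoped RealInnerProductSpace

/-- second estimate of the Stability Theorem:
`‖∇×e‖_{μ⁻¹,Ω} ≤ (ω/δ)‖g‖` in spectral form. -/
theorem maxwell_stability_curl
    {H : Type*} [NormedAddCommGroup H] [InnerProductSpace ℝ H] [CompleteSpace H]
    (φ : HilbertBasis ℕ ℝ H) (lam : ℕ → ℝ) (hlam : ∀ j, 0 < lam j)
    (ω : ℝ) (hω : 0 < ω) (δ : ℝ) (hδ : 0 < δ)
    (hres : ∀ j, δ ≤ |Real.sqrt (lam j) - ω|)
    (g e : H) (he : ∀ j, (lam j - ω ^ 2) * ⟪e, φ j⟫ = ω * ⟪g, φ j⟫) :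
    Summable (fun j => lam j * ⟪e, φ j⟫ ^ 2) ∧
    ∑' j, lam j * ⟪e, φ j⟫ ^ 2 ≤ (ω / δ) ^ 2 * ‖g‖ ^ 2 := by
  -- sum of coefficients of g
  have hg : HasSum (fun j => ⟪g, φ j⟫ ^ 2) (‖g‖ ^ 2) := by
    have := φ.hasSum_inner_mul_inner g g
    simpa [real_inner_comm, real_inner_self_eq_norm_sq, sq] using this
  -- pointwise bound
  have key : ∀ j, lam j * ⟪e, φ j⟫ ^ 2 ≤ (ω / δ) ^ 2 * ⟪g, φ j⟫ ^ 2 := by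
    intro j
    set s := Real.sqrt (lam j) with hs
    have hs0 : 0 ≤ s := Real.sqrt_nonneg _
    have hss : s ^ 2 = lam j := Real.sq_sqrt (hlam j).le
    have hd2 : δ ^ 2 ≤ (s - ω) ^ 2 := by
      have := hres j
      nlinarith [sq_abs (s - ω), abs_nonneg (s - ω)]
    have hej := he j
    have hfac : lam j - ω ^ 2 = (s - ω) * (s + ω) := by nlinarith [hss]
    rw [hfac] at hej
    have hsq : ((s - ω) * (s + ω)) ^ 2 * ⟪e, φ j⟫ ^ 2 = ω ^ 2 * ⟪g, φ j⟫ ^ 2 := by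
      calc ((s - ω) * (s + ω)) ^ 2 * ⟪e, φ j⟫ ^ 2
          = ((s - ω) * (s + ω) * ⟪e, φ j⟫) ^ 2 := by ring
        _ = (ω * ⟪g, φ j⟫) ^ 2 := by rw [hej]
        _ = ω ^ 2 * ⟪g, φ j⟫ ^ 2 := by ring
    rw [div_pow, div_mul_eq_mul_div, le_div_iff₀ (by positivity : (0:ℝ) < δ ^ 2)]
    have h1 : s ^ 2 * ⟪e, φ j⟫ ^ 2 * δ ^ 2 ≤ s ^ 2 * ⟪e, φ j⟫ ^ 2 * (s - ω) ^ 2 :=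
      mul_le_mul_of_nonneg_left hd2 (mul_nonneg (sq_nonneg _) (sq_nonneg _))
    have h2 : s ^ 2 ≤ (s + ω) ^ 2 := by nlinarith [mul_nonneg hs0 hω.le]
    have h3 : s ^ 2 * ⟪e, φ j⟫ ^ 2 * (s - ω) ^ 2 ≤ (s + ω) ^ 2 * ⟪e, φ j⟫ ^ 2 * (s - ω) ^ 2 := by
      nlinarith [mul_nonneg (sq_nonneg (⟪e, φ j⟫)) (sq_nonneg (s - ω))]
    have hsq' : (s + ω) ^ 2 * ⟪e, φ j⟫ ^ 2 * (s - ω) ^ 2 = ω ^ 2 * ⟪g, φ j⟫ ^ 2 := by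
      linear_combination hsq
    rw [← hss]
    linarith [h1, h3, hsq']
  have hbound : Summable (fun j => (ω / δ) ^ 2 * ⟪g, φ j⟫ ^ 2) :=
    hg.summable.mul_left _
  have hsummable : Summable (fun j => lam j * ⟪e, φ j⟫ ^ 2) :=
    Summable.of_nonneg_of_le (fun j => mul_nonneg (hlam j).le (sq_nonneg _)) key hbound
  refine ⟨hsummable, ?_⟩
  calc ∑' j, lam j * ⟪e, φ j⟫ ^ 2 ≤ ∑' j, (ω / δ) ^ 2 * ⟪g, φ j⟫ ^ 2 :=
        Summable.tsum_le_tsum key hsummable hbound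
    _ = (ω / δ) ^ 2 * ‖g‖ ^ 2 := by rw [tsum_mul_left, hg.tsum_eq]
end

section
/- Let H be a real separable Hilbert space with Hilbert basis (φ_j)_{j∈ℕ}, let λ : ℕ → ℝ satisfy λ_j > 0 for all j, let ω > 0, and let δ > 0 satisfy δ ≤ |√(λ_j) − ω| for all j. If g ∈ H and e ∈ H satisfy (λ_j − ω²)⟨e, φ_j⟩ = ω⟨g, φ_j⟩ for all j ∈ ℕ, then the family ((ω² + λ_j)·⟨e, φ_j⟩²)_{j∈ℕ} is summable and Σ_{j∈ℕ} (ω² + λ_j)·⟨e, φ_j⟩² ≤ (ω/δ)²·‖g‖². -/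
open scoped RealInnerProductSpace

lemma maxwell_ptwise (l ω δ a b : ℝ) (hl : 0 < l) (hω : 0 < ω) (hδ : 0 < δ)
    (hres : δ ≤ |Real.sqrt l - ω|) (he : (l - ω ^ 2) * a = ω * b) :
    (ω ^ 2 + l) * a ^ 2 ≤ (ω / δ) ^ 2 * b ^ 2 := by
  have hs : Real.sqrt l ^ 2 = l := Real.sq_sqrt hl.le
  have hsn : 0 ≤ Real.sqrt l := Real.sqrt_nonneg l
  have habs : δ ^ 2 ≤ (Real.sqrt l - ω) ^ 2 := by
    have := sq_abs (Real.sqrt l - ω)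
    nlinarith [hres, abs_nonneg (Real.sqrt l - ω)]
  have hkey : δ ^ 2 * (ω ^ 2 + l) ≤ (l - ω ^ 2) ^ 2 := by
    nlinarith [mul_le_mul_of_nonneg_right habs (sq_nonneg (Real.sqrt l + ω)),
      mul_nonneg hsn hω.le, sq_nonneg δ]
  have hpos : 0 < δ ^ 2 * (ω ^ 2 + l) := by positivity
  have hc : l - ω ^ 2 ≠ 0 := by
    intro h
    rw [h] at hkey
    nlinarith
  have ha : a = ω * b / (l - ω ^ 2) := by field_simp; linarith [he]
  subst ha
  have h2 : (0:ℝ) < (l - ω ^ 2) ^ 2 := by positivity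
  rw [div_pow, mul_div_assoc', div_le_iff₀ h2, div_pow, div_mul_eq_mul_div,
    div_mul_eq_mul_div, le_div_iff₀ (by positivity : (0:ℝ) < δ ^ 2)]
  nlinarith [mul_le_mul_of_nonneg_right hkey (mul_nonneg (sq_nonneg ω) (sq_nonneg b))]

/-- energy-norm bound `c_s ≤ ω/δ` from the Stability Theorem,
in spectral form. -/
theorem maxwell_stability_energy
    {H : Type*} [NormedAddCommGroup H] [InnerProductSpace ℝ H] [CompleteSpace H]
    (φ : HilbertBasis ℕ ℝ H) (lam : ℕ → ℝ) (hlam : ∀ j, 0 < lam j)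
    (ω : ℝ) (hω : 0 < ω) (δ : ℝ) (hδ : 0 < δ)
    (hres : ∀ j, δ ≤ |Real.sqrt (lam j) - ω|)
    (g e : H) (he : ∀ j, (lam j - ω ^ 2) * ⟪e, φ j⟫ = ω * ⟪g, φ j⟫) :
    Summable (fun j => (ω ^ 2 + lam j) * ⟪e, φ j⟫ ^ 2) ∧
    ∑' j, (ω ^ 2 + lam j) * ⟪e, φ j⟫ ^ 2 ≤ (ω / δ) ^ 2 * ‖g‖ ^ 2 := by
  have hle : ∀ j, (ω ^ 2 + lam j) * ⟪e, φ j⟫ ^ 2 ≤ (ω / δ) ^ 2 * ⟪g, φ j⟫ ^ 2 :=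
    fun j => maxwell_ptwise _ _ _ _ _ (hlam j) hω hδ (hres j) (he j)
  have hnn : ∀ j, 0 ≤ (ω ^ 2 + lam j) * ⟪e, φ j⟫ ^ 2 := fun j =>
    mul_nonneg (by nlinarith [hlam j, sq_nonneg ω]) (sq_nonneg _)
  have hgsum : Summable (fun j => ⟪g, φ j⟫ ^ 2) := by
    have := φ.summable_inner_mul_inner g g
    simpa [real_inner_comm, sq] using this
  have hgtsum : ∑' j, ⟪g, φ j⟫ ^ 2 = ‖g‖ ^ 2 := by
    have := φ.tsum_inner_mul_inner g g
    rw [real_inner_self_eq_norm_sq] at this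
    simpa [real_inner_comm, sq] using this
  have hmaj : Summable (fun j => (ω / δ) ^ 2 * ⟪g, φ j⟫ ^ 2) := hgsum.mul_left _
  have hsum : Summable (fun j => (ω ^ 2 + lam j) * ⟪e, φ j⟫ ^ 2) :=
    Summable.of_nonneg_of_le hnn hle hmaj
  refine ⟨hsum, ?_⟩
  calc ∑' j, (ω ^ 2 + lam j) * ⟪e, φ j⟫ ^ 2
      ≤ ∑' j, (ω / δ) ^ 2 * ⟪g, φ j⟫ ^ 2 := Summable.tsum_le_tsum hle hsum hmaj
    _ = (ω / δ) ^ 2 * ‖g‖ ^ 2 := by rw [tsum_mul_left, hgtsum]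
end

section
/- Let H be a real separable Hilbert space with Hilbert basis (φ_j)_{j∈ℕ}, let λ : ℕ → ℝ satisfy λ_j > 0 for all j, let ω > 0, and let δ > 0 satisfy δ ≤ |√(λ_j) − ω| for all j. Then there exists a continuous linear operator T : H → H with operator norm ‖T‖ ≤ 1/δ such that for every g ∈ H and every j ∈ ℕ, (λ_j − ω²)⟨T g, φ_j⟩ = ω⟨g, φ_j⟩. -/
open scoped RealInnerProductSpace

section Aux

/-- Bounded multiplier operator on `ℓ²(ℕ, ℝ)`. -/
lemma lp_multiplier (c : ℕ → ℝ) (C : ℝ) (hC : 0 ≤ C) (hc : ∀ j, |c j| ≤ C) :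
    ∃ M : lp (fun _ : ℕ => ℝ) 2 →L[ℝ] lp (fun _ : ℕ => ℝ) 2,
      ‖M‖ ≤ C ∧ ∀ f j, M f j = c j * f j := by
  have hp : 0 < (2 : ENNReal).toReal := by norm_num
  have hmem : ∀ f : lp (fun _ : ℕ => ℝ) 2,
      Memℓp (fun j => c j * f j) 2 := by
    intro f
    apply memℓp_gen
    have hsum := ((lp.memℓp f).summable hp).mul_left (C ^ (2 : ENNReal).toReal)
    refine Summable.of_nonneg_of_le (fun j => ?_) (fun j => ?_) hsum
    · positivity
    · have h1 : ‖c j * f j‖ ≤ C * ‖f j‖ := by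
        rw [norm_mul, Real.norm_eq_abs]
        exact mul_le_mul_of_nonneg_right (hc j) (norm_nonneg _)
      calc ‖c j * f j‖ ^ (2 : ENNReal).toReal
          ≤ (C * ‖f j‖) ^ (2 : ENNReal).toReal :=
            Real.rpow_le_rpow (norm_nonneg _) h1 (by norm_num)
        _ = C ^ (2 : ENNReal).toReal * ‖f j‖ ^ (2 : ENNReal).toReal :=
            Real.mul_rpow hC (norm_nonneg _)
  set Mlin : lp (fun _ : ℕ => ℝ) 2 →ₗ[ℝ] lp (fun _ : ℕ => ℝ) 2 :=
    { toFun := fun f => ⟨fun j => c j * f j, hmem f⟩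
      map_add' := by
        intro f g
        ext j
        simp [mul_add]
        rfl
      map_smul' := by
        intro a f
        ext j
        simp [mul_comm, mul_left_comm] } with hMlin
  have hbound : ∀ f : lp (fun _ : ℕ => ℝ) 2, ‖Mlin f‖ ≤ C * ‖f‖ := by
    intro f
    refine lp.norm_le_of_tsum_le hp (by positivity) ?_
    have h1 : ∀ j, ‖(Mlin f) j‖ ^ (2 : ENNReal).toReal
        ≤ C ^ (2 : ENNReal).toReal * ‖f j‖ ^ (2 : ENNReal).toReal := by
      intro j
      have h1 : ‖(Mlin f) j‖ ≤ C * ‖f j‖ := by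
        show ‖c j * f j‖ ≤ C * ‖f j‖
        rw [norm_mul, Real.norm_eq_abs]
        exact mul_le_mul_of_nonneg_right (hc j) (norm_nonneg _)
      calc ‖(Mlin f) j‖ ^ (2 : ENNReal).toReal
          ≤ (C * ‖f j‖) ^ (2 : ENNReal).toReal :=
            Real.rpow_le_rpow (norm_nonneg _) h1 (by norm_num)
        _ = C ^ (2 : ENNReal).toReal * ‖f j‖ ^ (2 : ENNReal).toReal :=
            Real.mul_rpow hC (norm_nonneg _)
    calc ∑' j, ‖(Mlin f) j‖ ^ (2 : ENNReal).toReal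
        ≤ ∑' j, C ^ (2 : ENNReal).toReal * ‖f j‖ ^ (2 : ENNReal).toReal := by
          refine Summable.tsum_le_tsum h1 ?_ ?_
          · refine Summable.of_nonneg_of_le (fun j => by positivity) h1 ?_
            exact ((lp.memℓp f).summable hp).mul_left _
          · exact ((lp.memℓp f).summable hp).mul_left _
      _ = C ^ (2 : ENNReal).toReal * ∑' j, ‖f j‖ ^ (2 : ENNReal).toReal := by
          rw [tsum_mul_left]
      _ = C ^ (2 : ENNReal).toReal * ‖f‖ ^ (2 : ENNReal).toReal := by
          rw [lp.norm_rpow_eq_tsum hp]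
      _ = (C * ‖f‖) ^ (2 : ENNReal).toReal :=
          (Real.mul_rpow hC (norm_nonneg _)).symm
  refine ⟨Mlin.mkContinuous C hbound, ?_, ?_⟩
  · exact Mlin.mkContinuous_norm_le hC hbound
  · intro f j
    rfl

end Aux

/-- the solution operator of the time-harmonic Maxwell problem is a
continuous linear operator with operator norm at most `1/δ`. -/
theorem maxwell_solution_operator
    {H : Type*} [NormedAddCommGroup H] [InnerProductSpace ℝ H] [CompleteSpace H]
    (φ : HilbertBasis ℕ ℝ H) (lam : ℕ → ℝ) (hlam : ∀ j, 0 < lam j)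
    (ω : ℝ) (hω : 0 < ω) (δ : ℝ) (hδ : 0 < δ)
    (hres : ∀ j, δ ≤ |Real.sqrt (lam j) - ω|) :
    ∃ T : H →L[ℝ] H, ‖T‖ ≤ 1 / δ ∧
      ∀ (g : H) (j : ℕ), (lam j - ω ^ 2) * ⟪T g, φ j⟫ = ω * ⟪g, φ j⟫ := by
  set c : ℕ → ℝ := fun j => ω / (lam j - ω ^ 2) with hc
  have hsq : ∀ j, Real.sqrt (lam j) ^ 2 = lam j := fun j =>
    Real.sq_sqrt (hlam j).le
  have hfact : ∀ j, lam j - ω ^ 2 = (Real.sqrt (lam j) - ω) * (Real.sqrt (lam j) + ω) := by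
    intro j
    have := hsq j
    ring_nf
    nlinarith [hsq j]
  have habs : ∀ j, δ * ω ≤ |lam j - ω ^ 2| := by
    intro j
    rw [hfact j, abs_mul]
    have h2 : ω ≤ |Real.sqrt (lam j) + ω| := by
      rw [abs_of_pos (by positivity)]
      have := Real.sqrt_nonneg (lam j)
      linarith
    calc δ * ω ≤ |Real.sqrt (lam j) - ω| * |Real.sqrt (lam j) + ω| := by
          exact mul_le_mul (hres j) h2 hω.le (abs_nonneg _)
      _ = _ := rfl
  have hne : ∀ j, lam j - ω ^ 2 ≠ 0 := by
    intro j h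
    have := habs j
    rw [h, abs_zero] at this
    nlinarith
  have hcb : ∀ j, |c j| ≤ 1 / δ := by
    intro j
    rw [hc, abs_div, abs_of_pos hω, div_le_div_iff₀ (abs_pos.mpr (hne j)) hδ]
    calc ω * δ = δ * ω := mul_comm _ _
      _ ≤ |lam j - ω ^ 2| := habs j
      _ = 1 * |lam j - ω ^ 2| := (one_mul _).symm
  obtain ⟨M, hMnorm, hMapp⟩ := lp_multiplier c (1 / δ) (by positivity) hcb
  set T : H →L[ℝ] H :=
    (φ.repr.symm.toContinuousLinearEquiv.toContinuousLinearMap.comp M).comp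
      φ.repr.toContinuousLinearEquiv.toContinuousLinearMap with hT
  have hTapp : ∀ (g : H) (j : ℕ), φ.repr (T g) j = c j * φ.repr g j := by
    intro g j
    simp only [hT, ContinuousLinearMap.comp_apply,
      LinearIsometryEquiv.coe_toContinuousLinearEquiv,
      ContinuousLinearEquiv.coe_coe]
    rw [LinearIsometryEquiv.apply_symm_apply]
    exact hMapp _ j
  refine ⟨T, ?_, ?_⟩
  · refine ContinuousLinearMap.opNorm_le_bound _ (by positivity) fun g => ?_
    have h1 : ‖T g‖ = ‖M (φ.repr g)‖ := by
      simp only [hT, ContinuousLinearMap.comp_apply,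
        LinearIsometryEquiv.coe_toContinuousLinearEquiv,
        ContinuousLinearEquiv.coe_coe]
      exact φ.repr.symm.norm_map _
    rw [h1]
    calc ‖M (φ.repr g)‖ ≤ ‖M‖ * ‖φ.repr g‖ := M.le_opNorm _
      _ ≤ (1 / δ) * ‖φ.repr g‖ := by
          gcongr
      _ = (1 / δ) * ‖g‖ := by rw [φ.repr.norm_map]
  · intro g j
    have h1 : ⟪T g, φ j⟫ = φ.repr (T g) j := by
      rw [HilbertBasis.repr_apply_apply, real_inner_comm]
    have h2 : ⟪g, φ j⟫ = φ.repr g j := by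
      rw [HilbertBasis.repr_apply_apply, real_inner_comm]
    rw [h1, h2, hTapp g j]
    show (lam j - ω ^ 2) * (ω / (lam j - ω ^ 2) * φ.repr g j) = ω * φ.repr g j
    rw [mul_comm (lam j - ω ^ 2), div_mul_eq_mul_div, div_mul_cancel₀ _ (hne j)]
end
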